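/- arXiv:2007.03046 — 6 statements merged into one kernel-verified Lean document; each statement's English description precedes it below -/
import Mathlib

section
/- Let m ≥ 1. The hypothesis space H of Sugeno classifiers on [0,1]^m (ranging over all capacities μ on [m] and all thresholds β ∈ [0,1]) shatters a set of C(m, ⌊m/2⌋) points in {0,1}^m, namely the indicator vectors of all ⌊m/2⌋-element subsets of [m]. Consequently the VC dimension of H is at least C(m, ⌊m/2⌋). -/
/-- The minimum of `u` over a finite subset `A` (with the convention that the
minimum over the empty set is `1`, the top of the unit interval). -/
noncomputable def setMin {m : ℕ} (u : Fin m → ℝ) (A : Finset (Fin m)) : ℝ :=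
  if h : A.Nonempty then A.inf' h u else 1

/-- The (discrete) Sugeno integral of `u : [m] → ℝ` with respect to the set
function `μ`, in disjunctive normal form:
`S_μ(u) = ⋁_{A ⊆ [m]} ((⋀_{j ∈ A} u j) ∧ μ A)`. -/
noncomputable def sugeno {m : ℕ} (μ : Finset (Fin m) → ℝ) (u : Fin m → ℝ) : ℝ :=
  (Finset.univ : Finset (Finset (Fin m))).sup' Finset.univ_nonempty
    (fun A => min (setMin u A) (μ A))

/-- A capacity on `[m]`: a monotone set function with `μ ∅ = 0` and `μ [m] = 1`. -/
def IsCapacity {m : ℕ} (μ : Finset (Fin m) → ℝ) : Prop :=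
  μ ∅ = 0 ∧ μ Finset.univ = 1 ∧
    ∀ A B : Finset (Fin m), A ⊆ B → μ A ≤ μ B

/-- The class of Sugeno classifiers (over all capacities `μ` and thresholds
`β ∈ [0,1]`) shatters the finite set `D ⊆ [0,1]^m`. -/
def SugenoShatters (m : ℕ) (D : Finset (Fin m → ℝ)) : Prop :=
  ∀ P ⊆ D, ∃ μ : Finset (Fin m) → ℝ, ∃ β : ℝ,
    IsCapacity μ ∧ 0 ≤ β ∧ β ≤ 1 ∧
      ∀ x ∈ D, ((β ≤ sugeno μ x) ↔ x ∈ P)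

/-- indicator vector of a set -/
def indVec {m : ℕ} (S : Finset (Fin m)) : Fin m → ℝ := fun i => if i ∈ S then 1 else 0

lemma indVec_inj {m : ℕ} : Function.Injective (indVec (m := m)) := by
  intro S T h
  ext i
  have h' := congrFun h i
  by_cases hS : i ∈ S <;> by_cases hT : i ∈ T <;>
    simp [indVec, hS, hT] at h' ⊢ <;> assumption

lemma setMin_indVec_of_subset {m : ℕ} {S A : Finset (Fin m)} (h : A ⊆ S) :
    setMin (indVec S) A = 1 := by
  unfold setMin
  split_ifs with hA
  · apply le_antisymm
    · obtain ⟨a, ha⟩ := hA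
      calc A.inf' ⟨a, ha⟩ (indVec S) ≤ indVec S a := Finset.inf'_le _ ha
        _ = 1 := by simp [indVec, h ha]
    · exact Finset.le_inf' _ _ fun i hi => by simp [indVec, h hi]
  · rfl

lemma setMin_indVec_nonpos {m : ℕ} {S A : Finset (Fin m)} (h : ¬ A ⊆ S) :
    setMin (indVec S) A ≤ 0 := by
  obtain ⟨i, hiA, hiS⟩ := Finset.not_subset.mp h
  have hA : A.Nonempty := ⟨i, hiA⟩
  unfold setMin
  rw [dif_pos hA]
  calc A.inf' hA (indVec S) ≤ indVec S i := Finset.inf'_le _ hiA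
    _ = 0 := by simp [indVec, hiS]

open Classical in
/-- The set of indicator vectors of all `⌊m/2⌋`-element subsets of `[m]` has
cardinality `C(m, ⌊m/2⌋)` and is shattered by the class of Sugeno classifiers;
hence the VC dimension of this class is at least `C(m, ⌊m/2⌋)`. -/
theorem sugeno_classifiers_shatter (m : ℕ) (hm : 1 ≤ m)
    (D : Finset (Fin m → ℝ))
    (hD : D = (Finset.powersetCard (m / 2) (Finset.univ : Finset (Fin m))).image
      (fun S => fun i => if i ∈ S then (1 : ℝ) else 0)) :
    D.card = m.choose (m / 2) ∧ SugenoShatters m D := by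
  have hne : Nonempty (Fin m) := ⟨⟨0, hm⟩⟩
  have hindD : ∀ S : Finset (Fin m), indVec S ∈ D ↔ S.card = m / 2 := by
    intro S
    rw [hD]
    constructor
    · intro h
      obtain ⟨T, hT, hTS⟩ := Finset.mem_image.mp h
      rw [Finset.mem_powersetCard] at hT
      have : T = S := indVec_inj hTS
      rw [← this]
      exact hT.2
    · intro h
      exact Finset.mem_image.mpr ⟨S, Finset.mem_powersetCard.mpr ⟨Finset.subset_univ _, h⟩, rfl⟩
  constructor
  · rw [hD]
    have h1 : (Finset.image indVec (Finset.powersetCard (m / 2) (Finset.univ : Finset (Fin m)))).card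
        = m.choose (m / 2) := by
      rw [Finset.card_image_of_injective _ indVec_inj, Finset.card_powersetCard,
        Finset.card_univ, Fintype.card_fin]
    exact h1
  · intro P hP
    set μ : Finset (Fin m) → ℝ := fun A =>
      if A = Finset.univ ∨ ∃ S : Finset (Fin m), S.Nonempty ∧ indVec S ∈ P ∧ S ⊆ A
      then 1 else 0 with hμ
    set β : ℝ := if indVec (∅ : Finset (Fin m)) ∈ P then 0 else 1 with hβ
    have hμ01 : ∀ A, μ A = 0 ∨ μ A = 1 := by
      intro A; by_cases h : A = Finset.univ ∨ ∃ S : Finset (Fin m), S.Nonempty ∧ indVec S ∈ P ∧ S ⊆ A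
      · right; simp [hμ, h]
      · left; simp [hμ, h]
    have hβ01 : 0 ≤ β ∧ β ≤ 1 := by
      rw [hβ]; split_ifs <;> norm_num
    refine ⟨μ, β, ⟨?_, ?_, ?_⟩, hβ01.1, hβ01.2, ?_⟩
    · -- μ ∅ = 0
      rw [hμ]
      simp only
      rw [if_neg]
      push_neg
      refine ⟨(Finset.univ_nonempty.ne_empty).symm, ?_⟩
      rintro S hS hSP hsub
      exact absurd (Finset.subset_empty.mp hsub) hS.ne_empty
    · simp [hμ]
    · intro A B hAB
      by_cases h : A = Finset.univ ∨ ∃ S : Finset (Fin m), S.Nonempty ∧ indVec S ∈ P ∧ S ⊆ A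
      · have hB : B = Finset.univ ∨ ∃ S : Finset (Fin m), S.Nonempty ∧ indVec S ∈ P ∧ S ⊆ B := by
          rcases h with h | ⟨S, h1, h2, h3⟩
          · left; subst h; exact (Finset.univ_subset_iff.mp hAB)
          · right; exact ⟨S, h1, h2, h3.trans hAB⟩
        simp [hμ, h, hB]
      · have hA0 : μ A = 0 := by simp [hμ, h]
        rw [hA0]
        rcases hμ01 B with hB | hB <;> rw [hB] <;> norm_num
    · -- classification
      intro x hxD
      rw [hD] at hxD
      obtain ⟨S, hS, rfl⟩ := Finset.mem_image.mp hxD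
      rw [Finset.mem_powersetCard] at hS
      have hScard : S.card = m / 2 := hS.2
      show (β ≤ sugeno μ (indVec S)) ↔ indVec S ∈ P
      by_cases hSP : indVec S ∈ P
      · simp only [hSP, iff_true]
        by_cases hSne : S.Nonempty
        · have hterm : min (setMin (indVec S) S) (μ S) = 1 := by
            rw [setMin_indVec_of_subset (subset_refl S)]
            have : μ S = 1 := by
              rw [hμ]; exact if_pos (Or.inr ⟨S, hSne, hSP, subset_refl S⟩)
            rw [this]; norm_num
          have : (1 : ℝ) ≤ sugeno μ (indVec S) := by
            rw [← hterm]
            unfold sugeno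
            exact Finset.le_sup' (fun A => min (setMin (indVec S) A) (μ A)) (Finset.mem_univ S)
          linarith [hβ01.2]
        · have hS0 : S = ∅ := Finset.not_nonempty_iff_eq_empty.mp hSne
          have hβ0 : β = 0 := by rw [hβ, if_pos (hS0 ▸ hSP)]
          have hμ0 : (0:ℝ) ≤ μ ∅ := by rcases hμ01 ∅ with h | h <;> rw [h] <;> norm_num
          have hterm : (0 : ℝ) ≤ min (setMin (indVec S) ∅) (μ ∅) := by
            rw [setMin_indVec_of_subset (Finset.empty_subset _)]
            exact le_min (by norm_num) hμ0
          have hle : min (setMin (indVec S) ∅) (μ ∅) ≤ sugeno μ (indVec S) := by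
            unfold sugeno
            exact Finset.le_sup' (fun A => min (setMin (indVec S) A) (μ A))
              (Finset.mem_univ (∅ : Finset (Fin m)))
          rw [hβ0]; exact le_trans hterm hle
      · simp only [hSP, iff_false]
        have hemp : indVec (∅ : Finset (Fin m)) ∉ P := by
          intro hc
          have h0 : (∅ : Finset (Fin m)).card = m / 2 := (hindD ∅).mp (hP hc)
          rw [Finset.card_empty] at h0
          have hS0 : S = ∅ := Finset.card_eq_zero.mp (by omega)
          exact hSP (hS0 ▸ hc)
        have hβ1 : β = 1 := by rw [hβ, if_neg hemp]
        have hsup : sugeno μ (indVec S) ≤ 0 := by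
          apply Finset.sup'_le
          intro A _
          by_cases hAS : A ⊆ S
          · have : μ A = 0 := by
              show (if A = Finset.univ ∨ ∃ S : Finset (Fin m), S.Nonempty ∧ indVec S ∈ P ∧ S ⊆ A
                then (1:ℝ) else 0) = 0
              rw [if_neg]
              push_neg
              constructor
              · intro hAu
                have hSu : S = Finset.univ := Finset.univ_subset_iff.mp (hAu ▸ hAS)
                have : S.card = m := by rw [hSu, Finset.card_univ, Fintype.card_fin]
                have : m / 2 < m := Nat.div_lt_self hm one_lt_two
                omega
              · rintro T hTne hTP hTA
                have hTcard : T.card = m / 2 := (hindD T).mp (hP hTP)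
                have hTS : T = S :=
                  Finset.eq_of_subset_of_card_le (hTA.trans hAS) (by omega)
                exact hSP (hTS ▸ hTP)
            calc min (setMin (indVec S) A) (μ A) ≤ μ A := min_le_right _ _
              _ = 0 := this
          · exact le_trans (min_le_left _ _) (setMin_indVec_nonpos hAS)
        intro hc
        rw [hβ1] at hc
        linarith
end

section
/- Let μ be a capacity on [m], β ∈ [0,1], and let f_i: X_i → [0,1] be feature transformations with u_i = f_i(x_i). Then the Sugeno classifier h(x) = I( S_μ(f_1(x_1),...,f_m(x_m)) ≥ β ) coincides with the disjunctive normal form classifier h'(x) = ⋁_{A boundary set} ⋀_{i ∈ A} I( f_i(x_i) ≥ β ), where the disjunction ranges over all boundary sets A of [m] for μ and β. That is, for every x, S_μ(f_1(x_1),...,f_m(x_m)) ≥ β if and only if there exists a boundary set A with f_i(x_i) ≥ β for all i ∈ A. -/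
/-- A boundary set for the capacity `μ` and threshold `β`: a minimal subset of
`[m]` whose measure reaches the threshold. -/
def IsBoundarySet {m : ℕ} (μ : Finset (Fin m) → ℝ) (β : ℝ)
    (A : Finset (Fin m)) : Prop :=
  β ≤ μ A ∧ ∀ A' ⊂ A, μ A' < β

theorem le_sugeno_iff {m : ℕ} (μ : Finset (Fin m) → ℝ) (u : Fin m → ℝ) (β : ℝ) :
    β ≤ sugeno μ u ↔ ∃ A, β ≤ setMin u A ∧ β ≤ μ A := by
  simp [sugeno, Finset.le_sup'_iff]

theorem le_setMin_iff {m : ℕ} {u : Fin m → ℝ} {β : ℝ} (hβ : β ≤ 1) (A : Finset (Fin m)) :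
    β ≤ setMin u A ↔ ∀ i ∈ A, β ≤ u i := by
  unfold setMin
  split_ifs with hA
  · exact Finset.le_inf'_iff hA u
  · simp [Finset.not_nonempty_iff_eq_empty.mp hA, hβ]

theorem isBoundarySet_iff_minimal {m : ℕ} (μ : Finset (Fin m) → ℝ) (β : ℝ) (A : Finset (Fin m)) :
    IsBoundarySet μ β A ↔ Minimal (fun B => β ≤ μ B) A := by
  simp only [IsBoundarySet, minimal_iff_forall_lt, not_le]

theorem exists_isBoundarySet_subset {m : ℕ} {μ : Finset (Fin m) → ℝ} {β : ℝ} {A : Finset (Fin m)}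
    (hA : β ≤ μ A) : ∃ B ⊆ A, IsBoundarySet μ β B := by
  simp only [isBoundarySet_iff_minimal]
  exact exists_minimal_le_of_wellFoundedLT _ A hA

/-- Shrinking `A` to a boundary set inside it can only raise the minimum of `u` over it. -/
theorem le_sugeno_iff_exists_isBoundarySet {m : ℕ} (μ : Finset (Fin m) → ℝ) (u : Fin m → ℝ)
    {β : ℝ} (hβ : β ≤ 1) :
    β ≤ sugeno μ u ↔ ∃ A, IsBoundarySet μ β A ∧ ∀ i ∈ A, β ≤ u i := by
  simp only [le_sugeno_iff, le_setMin_iff hβ]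
  constructor
  · rintro ⟨A, hu, hμA⟩
    obtain ⟨B, hBA, hB⟩ := exists_isBoundarySet_subset hμA
    exact ⟨B, hB, fun i hi => hu i (hBA hi)⟩
  · rintro ⟨A, hA, hu⟩
    exact ⟨A, hu, hA.1⟩

theorem sugeno_classifier_eq_dnf_general (m : ℕ) (μ : Finset (Fin m) → ℝ)
    (β : ℝ) (hβ1 : β ≤ 1)
    (X : Fin m → Type) (f : ∀ i, X i → ℝ)
    (x : ∀ i, X i) :
    (β ≤ sugeno μ (fun i => f i (x i))) ↔
      ∃ A : Finset (Fin m), IsBoundarySet μ β A ∧ ∀ i ∈ A, β ≤ f i (x i) :=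
  le_sugeno_iff_exists_isBoundarySet μ _ hβ1

/-- The Sugeno classifier coincides with the disjunctive-normal-form classifier
over boundary sets: `S_μ(f₁(x₁),…,f_m(x_m)) ≥ β` iff there exists a boundary
set `A` with `f_i(x_i) ≥ β` for all `i ∈ A`. -/
theorem sugeno_classifier_eq_dnf (m : ℕ) (μ : Finset (Fin m) → ℝ)
    (hμ : IsCapacity μ) (β : ℝ) (hβ0 : 0 ≤ β) (hβ1 : β ≤ 1)
    (X : Fin m → Type) (f : ∀ i, X i → ℝ)
    (hf : ∀ i x, 0 ≤ f i x ∧ f i x ≤ 1) (x : ∀ i, X i) :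
    (β ≤ sugeno μ (fun i => f i (x i))) ↔
      ∃ A : Finset (Fin m), IsBoundarySet μ β A ∧ ∀ i ∈ A, β ≤ f i (x i) :=
  sugeno_classifier_eq_dnf_general m μ β hβ1 X f x
end

section
/- Let μ be a capacity on [m] and u = (u_1,...,u_m) ∈ [0,1]^m. Let σ be a permutation of [m] with u_{σ(1)} ≤ ... ≤ u_{σ(m)} and A_{σ(j)} = {σ(j),...,σ(m)}. Then the Sugeno integral equals the median of the 2m−1 values u_1,...,u_m, μ(A_{σ(2)}),...,μ(A_{σ(m)}); that is, S_μ(u) is the m-th smallest element of the multiset {u_1,...,u_m, μ(A_{σ(2)}),...,μ(A_{σ(m)})}. -/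
open Finset

namespace List

variable {α : Type*} [LinearOrder α] {l : List α} {k : ℕ} {x : α}

theorem Pairwise.getElem_le_of_mem_drop (hl : l.Pairwise (· ≤ ·)) (hk : k < l.length)
    (hx : x ∈ l.drop k) : l[k] ≤ x := by
  have hdrop := hl.drop (i := k)
  rw [drop_eq_getElem_cons hk, pairwise_cons] at hdrop
  rw [drop_eq_getElem_cons hk] at hx
  rcases mem_cons.1 hx with rfl | hx
  exacts [le_rfl, hdrop.1 x hx]

theorem Pairwise.le_getElem_of_mem_take (hl : l.Pairwise (· ≤ ·)) (hk : k < l.length)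
    (hx : x ∈ l.take (k + 1)) : x ≤ l[k] := by
  have htake := hl.take (i := k + 1)
  rw [take_succ_eq_append_getElem hk, pairwise_append] at htake
  rw [take_succ_eq_append_getElem hk, mem_append, mem_singleton] at hx
  rcases hx with hx | rfl
  exacts [htake.2.2 x hx _ (mem_singleton_self _), le_rfl]

theorem Pairwise.getElem_le_of_lt_countP (hl : l.Pairwise (· ≤ ·)) (hk : k < l.length)
    (h : k < l.countP (· ≤ x)) : l[k] ≤ x := by
  by_contra! hx
  have hdrop : (l.drop k).countP (· ≤ x) = 0 :=
    countP_eq_zero.2 fun y hy => by simpa using hx.trans_le (hl.getElem_le_of_mem_drop hk hy)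
  have : l.countP (· ≤ x) ≤ k := by
    rw [← take_append_drop k l, countP_append, hdrop, Nat.add_zero]
    exact countP_le_length.trans (length_take_le _ _)
  omega

theorem Pairwise.le_getElem_of_le_countP (hl : l.Pairwise (· ≤ ·)) (hk : k < l.length)
    (h : l.length - k ≤ l.countP (x ≤ ·)) : x ≤ l[k] := by
  by_contra! hx
  have htake : (l.take (k + 1)).countP (x ≤ ·) = 0 :=
    countP_eq_zero.2 fun y hy => by simpa using (hl.le_getElem_of_mem_take hk hy).trans_lt hx
  have : l.countP (x ≤ ·) ≤ l.length - (k + 1) := by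
    nth_rw 1 [← take_append_drop (k + 1) l]
    rw [countP_append, htake, Nat.zero_add, ← length_drop]
    exact countP_le_length
  omega

end List

theorem Multiset.getD_sort_eq_of_countP {α : Type*} [LinearOrder α] {M : Multiset α} {k : ℕ}
    {x : α} (hk : k < card M) (h₁ : k < M.countP (· ≤ x)) (h₂ : card M - k ≤ M.countP (x ≤ ·))
    (d : α) : (M.sort (· ≤ ·)).getD k d = x := by
  have hl := M.pairwise_sort (· ≤ ·)
  have hcountP (p : α → Prop) [DecidablePred p] : (M.sort (· ≤ ·)).countP p = M.countP p := by
    rw [← coe_countP, sort_eq]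
  rw [← length_sort (· ≤ ·)] at hk h₂
  rw [← hcountP] at h₁ h₂
  rw [List.getD_eq_getElem _ _ hk]
  exact le_antisymm (hl.getElem_le_of_lt_countP hk h₁) (hl.le_getElem_of_le_countP hk h₂)

variable {m : ℕ}

theorem IsCapacity.neZero {μ : Finset (Fin m) → ℝ} (hμ : IsCapacity μ) : NeZero m := by
  refine ⟨fun hm => ?_⟩
  subst hm
  have h := hμ.2.1
  rw [univ_eq_empty, hμ.1] at h
  exact zero_ne_one h

theorem IsCapacity.monotone {μ : Finset (Fin m) → ℝ} (hμ : IsCapacity μ) : Monotone μ :=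
  fun A B hAB => hμ.2.2 A B hAB

theorem setMin_le {u : Fin m → ℝ} {A : Finset (Fin m)} {i : Fin m} (hi : i ∈ A) :
    setMin u A ≤ u i := by
  rw [setMin, dif_pos ⟨i, hi⟩]
  exact inf'_le u hi

section SortedTail

variable (σ : Equiv.Perm (Fin m))

/-- The paper's `A_{σ(j)} = {σ(j), …, σ(m)}`. -/
def sortedTail (j : Fin m) : Finset (Fin m) := (Ici j).image σ

theorem sortedTail_zero [NeZero m] : sortedTail σ 0 = univ := by
  simp [sortedTail]

theorem sortedTail_antitone : Antitone (sortedTail σ) :=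
  fun _ _ hij => image_subset_image (Ici_subset_Ici.2 hij)

theorem exists_mem_subset_sortedTail {A : Finset (Fin m)} (hA : A.Nonempty) :
    ∃ j, σ j ∈ A ∧ A ⊆ sortedTail σ j := by
  obtain ⟨i, hi, hmin⟩ := A.exists_min_image σ.symm hA
  refine ⟨σ.symm i, by simpa using hi, fun x hx => mem_image.2 ⟨σ.symm x, ?_, by simp⟩⟩
  exact mem_Ici.2 (hmin x hx)

theorem setMin_sortedTail {u : Fin m → ℝ} (hσ : Monotone (u ∘ σ)) (j : Fin m) :
    setMin u (sortedTail σ j) = u (σ j) := by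
  have hj : σ j ∈ sortedTail σ j := mem_image_of_mem σ (mem_Ici.2 le_rfl)
  refine le_antisymm (setMin_le hj) ?_
  rw [setMin, dif_pos ⟨_, hj⟩]
  refine le_inf' _ _ fun i hi => ?_
  obtain ⟨k, hk, rfl⟩ := mem_image.1 hi
  exact hσ (mem_Ici.1 hk)

end SortedTail

theorem sugeno_eq_sup_sortedTail [NeZero m] {μ : Finset (Fin m) → ℝ} (hμ : IsCapacity μ)
    {u : Fin m → ℝ} (hu : ∀ i, 0 ≤ u i) {σ : Equiv.Perm (Fin m)} (hσ : Monotone (u ∘ σ)) :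
    sugeno μ u = univ.sup' univ_nonempty fun j => min (u (σ j)) (μ (sortedTail σ j)) := by
  refine le_antisymm (sup'_le _ _ fun A _ => ?_) (sup'_le _ _ fun j _ => ?_)
  · rcases A.eq_empty_or_nonempty with rfl | hA
    · refine (min_le_right _ _).trans (le_sup'_of_le _ (mem_univ 0) (le_min ?_ ?_))
      · exact hμ.1 ▸ hu (σ 0)
      · exact hμ.monotone (empty_subset _)
    · obtain ⟨j, hjA, hAj⟩ := exists_mem_subset_sortedTail σ hA
      exact le_sup'_of_le _ (mem_univ j) (min_le_min (setMin_le hjA) (hμ.monotone hAj))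
  · rw [← setMin_sortedTail σ hσ j]
    exact le_sup' (fun A => min (setMin u A) (μ A)) (mem_univ _)

section MedianValues

variable (μ : Finset (Fin m) → ℝ) (u : Fin m → ℝ) (σ : Equiv.Perm (Fin m))

/-- The `2m − 1` values `u_1, …, u_m, μ(A_{σ(2)}), …, μ(A_{σ(m)})`, indexed from `0`. -/
def medianValues : Multiset ℝ :=
  univ.val.map u + (univ.val.filter fun j : Fin m => (j : ℕ) ≠ 0).map fun j => μ (sortedTail σ j)

theorem card_medianValues [NeZero m] : Multiset.card (medianValues μ u σ) = 2 * m - 1 := by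
  have hcard : #{j : Fin m | (j : ℕ) ≠ 0} = m - 1 := by
    simp only [ne_eq, Fin.val_eq_zero_iff]
    rw [filter_ne', card_erase_of_mem (mem_univ _), card_univ, Fintype.card_fin]
  rw [medianValues, Multiset.card_add, Multiset.card_map, Multiset.card_map, ← filter_val]
  simp only [card_val, card_univ, Fintype.card_fin, hcard]
  omega

theorem countP_medianValues (p : ℝ → Prop) [DecidablePred p] :
    (medianValues μ u σ).countP p =
      #{j | p (u (σ j))} + #{j : Fin m | p (μ (sortedTail σ j)) ∧ (j : ℕ) ≠ 0} := by
  have hσ : univ.val.map u = univ.val.map (u ∘ σ) := by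
    rw [← Multiset.map_map, Multiset.map_univ_val_equiv]
  rw [medianValues, hσ, Multiset.countP_add, Multiset.countP_map, Multiset.countP_map,
    Multiset.filter_filter]
  rfl

variable {μ u σ} [NeZero m] {S : ℝ}

theorem le_countP_le_medianValues (hμ : μ univ = 1) (hu : ∀ i, u i ≤ 1)
    (hS : ∀ j, min (u (σ j)) (μ (sortedTail σ j)) ≤ S) :
    m ≤ (medianValues μ u σ).countP (· ≤ S) := by
  have hcover : univ ⊆ ({j | u (σ j) ≤ S} : Finset (Fin m)) ∪
      ({j | μ (sortedTail σ j) ≤ S ∧ (j : ℕ) ≠ 0} : Finset (Fin m)) := by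
    intro j _
    simp only [mem_union, mem_filter, mem_univ, true_and]
    by_cases hj : (j : ℕ) = 0
    · obtain rfl : j = 0 := Fin.ext hj
      left
      simpa [sortedTail_zero, hμ, min_eq_left (hu _)] using hS 0
    · exact (min_le_iff.1 (hS j)).imp id (⟨·, hj⟩)
  rw [countP_medianValues]
  calc m = #(univ : Finset (Fin m)) := by simp
    _ ≤ _ := card_le_card hcover
    _ ≤ _ := card_union_le _ _

theorem le_countP_ge_medianValues (hμ : Monotone μ) (hσ : Monotone (u ∘ σ)) (j₀ : Fin m)
    (hS : S ≤ min (u (σ j₀)) (μ (sortedTail σ j₀))) :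
    m ≤ (medianValues μ u σ).countP (S ≤ ·) := by
  have hu : Ici j₀ ⊆ ({j | S ≤ u (σ j)} : Finset (Fin m)) := fun j hj =>
    mem_filter.2 ⟨mem_univ _, (le_min_iff.1 hS).1.trans (hσ (mem_Ici.1 hj))⟩
  have hμS : Ioc 0 j₀ ⊆ ({j | S ≤ μ (sortedTail σ j) ∧ (j : ℕ) ≠ 0} : Finset (Fin m)) :=
      fun j hj => by
    obtain ⟨h0, hj⟩ := mem_Ioc.1 hj
    refine mem_filter.2 ⟨mem_univ _, (le_min_iff.1 hS).2.trans (hμ (sortedTail_antitone σ hj)), ?_⟩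
    exact (Fin.val_pos_iff.2 h0).ne'
  have hcard_u := card_le_card hu
  have hcard_μ := card_le_card hμS
  rw [Fin.card_Ici] at hcard_u
  rw [Fin.card_Ioc, Fin.val_zero] at hcard_μ
  rw [countP_medianValues]
  omega

end MedianValues

theorem sugeno_eq_median_general (m : ℕ)
    (μ : Finset (Fin m) → ℝ) (hμ : IsCapacity μ)
    (u : Fin m → ℝ) (hu : ∀ i, 0 ≤ u i ∧ u i ≤ 1)
    (σ : Equiv.Perm (Fin m))
    (hσ : ∀ i j : Fin m, i ≤ j → u (σ i) ≤ u (σ j))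
    (M : Multiset ℝ)
    (hM : M = (Finset.univ : Finset (Fin m)).val.map u +
      (((Finset.univ : Finset (Fin m)).val.filter (fun j : Fin m => (j : ℕ) ≠ 0)).map
        (fun j => μ ((Finset.Ici j).image σ)))) :
    sugeno μ u = (M.sort (· ≤ ·)).getD (m - 1) 0 := by
  have := hμ.neZero
  have hm := Nat.pos_of_neZero m
  obtain rfl : M = medianValues μ u σ := hM
  rw [sugeno_eq_sup_sortedTail hμ (fun i => (hu i).1) hσ]
  set chainMin := fun j => min (u (σ j)) (μ (sortedTail σ j))
  obtain ⟨j₀, -, hj₀⟩ := exists_mem_eq_sup' univ_nonempty chainMin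
  have hle := le_countP_le_medianValues (S := univ.sup' univ_nonempty chainMin) hμ.2.1
    (fun i => (hu i).2) fun j => le_sup' chainMin (mem_univ j)
  have hge := le_countP_ge_medianValues hμ.monotone hσ j₀ hj₀.le
  have hcard := card_medianValues μ u σ
  exact (Multiset.getD_sort_eq_of_countP (by omega) (by omega) (by omega) 0).symm

/-- Median representation of the Sugeno integral: `S_μ(u)` is the `m`-th
smallest element of the multiset of `2m − 1` values
`{u_1, …, u_m, μ(A_{σ(2)}), …, μ(A_{σ(m)})}`, where `u_{σ(1)} ≤ … ≤ u_{σ(m)}`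
and `A_{σ(j)} = {σ(j), …, σ(m)}`. -/
theorem sugeno_eq_median (m : ℕ) (hm : 0 < m)
    (μ : Finset (Fin m) → ℝ) (hμ : IsCapacity μ)
    (u : Fin m → ℝ) (hu : ∀ i, 0 ≤ u i ∧ u i ≤ 1)
    (σ : Equiv.Perm (Fin m))
    (hσ : ∀ i j : Fin m, i ≤ j → u (σ i) ≤ u (σ j))
    (M : Multiset ℝ)
    (hM : M = (Finset.univ : Finset (Fin m)).val.map u +
      (((Finset.univ : Finset (Fin m)).val.filter (fun j : Fin m => (j : ℕ) ≠ 0)).map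
        (fun j => μ ((Finset.Ici j).image σ)))) :
    sugeno μ u = (M.sort (· ≤ ·)).getD (m - 1) 0 :=
  sugeno_eq_median_general m μ hμ u hu σ hσ M hM
end

section
/- Let μ be a capacity on [m], let k* ∈ [m], and define μ* on nonempty subsets B ⊆ [m] by μ*(B) = μ(B) if |B| ≤ k*, and μ*(B) = ⋁_{A ⊆ B, |A| = k*} μ(A) otherwise, with μ*(∅) = 0. Then μ* is monotone, μ*(∅) = 0, μ*([m]) = ⋁_{|A| = k*} μ(A), and μ* is k*-maxitive. -/
/-- The `k`-maxitive approximation `μ*` of `μ`: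
`μ*(B) = μ(B)` if `|B| ≤ k`, and `μ*(B) = ⋁_{A ⊆ B, |A| = k} μ(A)` otherwise. -/
noncomputable def muStar {m : ℕ} (μ : Finset (Fin m) → ℝ) (k : ℕ)
    (B : Finset (Fin m)) : ℝ :=
  if h : B.card ≤ k then μ B
  else
    (B.powerset.filter fun A => A.card = k).sup'
      (by
        obtain ⟨t, ht, htc⟩ := Finset.exists_subset_card_eq (le_of_not_ge h)
        exact ⟨t, Finset.mem_filter.mpr ⟨Finset.mem_powerset.mpr ht, htc⟩⟩) μ

/-- `μ` is `k`-maxitive: every set of more than `k` elements has a proper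
subset of equal measure. -/
def KMaxitive {m : ℕ} (μ : Finset (Fin m) → ℝ) (k : ℕ) : Prop :=
  ∀ U : Finset (Fin m), k < U.card → ∃ V, V ⊂ U ∧ μ V = μ U

/-- The `k*`-maxitive approximation `μ*` of a capacity `μ` is a monotone set
function with `μ*(∅) = 0` and `μ*([m]) = ⋁_{|A| = k*} μ(A)`, and it is
`k*`-maxitive. -/
theorem muStar_is_kmaxitive_capacity (m kstar : ℕ) (hk1 : 1 ≤ kstar)
    (hk2 : kstar ≤ m) (μ : Finset (Fin m) → ℝ) (hμ : IsCapacity μ) :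
    muStar μ kstar ∅ = 0 ∧
    (∀ A B : Finset (Fin m), A ⊆ B → muStar μ kstar A ≤ muStar μ kstar B) ∧
    muStar μ kstar (Finset.univ : Finset (Fin m)) =
      ((Finset.univ : Finset (Fin m)).powerset.filter
          fun A => A.card = kstar).sup'
        (by
          obtain ⟨t, ht, htc⟩ := Finset.exists_subset_card_eq
            (s := (Finset.univ : Finset (Fin m))) (n := kstar)
            (by simpa using hk2)
          exact ⟨t, Finset.mem_filter.mpr ⟨Finset.mem_powerset.mpr ht, htc⟩⟩) μ ∧
    KMaxitive (muStar μ kstar) kstar := by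
  obtain ⟨h0, h1, hmono⟩ := hμ
  have key : ∀ A B : Finset (Fin m), A ⊆ B → muStar μ kstar A ≤ muStar μ kstar B := by
    intro A B hAB
    unfold muStar
    split_ifs with hA hB hB
    · exact hmono A B hAB
    · obtain ⟨C, hAC, hCB, hCc⟩ :=
        Finset.exists_subsuperset_card_eq hAB hA (le_of_not_ge hB)
      exact le_trans (hmono A C hAC)
        (Finset.le_sup' μ (Finset.mem_filter.mpr ⟨Finset.mem_powerset.mpr hCB, hCc⟩))
    · exact absurd (le_trans (Finset.card_le_card hAB) hB) hA
    · apply Finset.sup'_le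
      intro C hC
      obtain ⟨hCp, hCc⟩ := Finset.mem_filter.mp hC
      exact Finset.le_sup' μ (Finset.mem_filter.mpr
        ⟨Finset.mem_powerset.mpr ((Finset.mem_powerset.mp hCp).trans hAB), hCc⟩)
  refine ⟨?_, key, ?_, ?_⟩
  · have : (∅ : Finset (Fin m)).card ≤ kstar := by simp
    simp [muStar, this, h0]
  · unfold muStar
    split_ifs with h
    · have hkm : kstar = m := le_antisymm hk2 (by simpa using h)
      apply le_antisymm
      · exact Finset.le_sup' μ (Finset.mem_filter.mpr
          ⟨Finset.mem_powerset.mpr (le_refl _), by simp [hkm]⟩)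
      · apply Finset.sup'_le
        intro C hC
        simpa [h1] using hmono C Finset.univ (Finset.subset_univ C)
    · rfl
  · intro U hU
    have hUk : ¬ U.card ≤ kstar := not_le.mpr hU
    obtain ⟨A, hA, hAeq⟩ := Finset.exists_mem_eq_sup'
      (by
        obtain ⟨t, ht, htc⟩ := Finset.exists_subset_card_eq (le_of_not_ge hUk)
        exact ⟨t, Finset.mem_filter.mpr ⟨Finset.mem_powerset.mpr ht, htc⟩⟩) μ
    obtain ⟨hAU, hAc⟩ := Finset.mem_filter.mp hA
    replace hAU := Finset.mem_powerset.mp hAU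
    have hUcard : kstar < U.card := hU
    obtain ⟨V, hAV, hVU, hVc⟩ := Finset.exists_subsuperset_card_eq (n := U.card - 1) hAU
      (by omega : A.card ≤ U.card - 1) (by omega)
    have hVne : V ≠ U := by
      intro h; rw [h] at hVc; omega
    refine ⟨V, lt_of_le_of_ne hVU hVne, ?_⟩
    have hmuU : muStar μ kstar U = μ A := by
      rw [muStar, dif_neg hUk]; exact hAeq
    apply le_antisymm (key V U hVU)
    rw [hmuU, muStar]
    split_ifs with hV
    · have : A = V := Finset.eq_of_subset_of_card_le hAV (by omega)
      rw [this]
    · exact Finset.le_sup' μ (Finset.mem_filter.mpr ⟨Finset.mem_powerset.mpr hAV, hAc⟩)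
end

section
/- Let A_1,...,A_J be nonempty subsets of [m] and define the capacity μ on [m] by μ(A) = 1 if A_j ⊆ A for some j ∈ {1,...,J}, and μ(A) = 0 otherwise (assuming A_j ⊆ [m] for some j so that μ([m]) = 1). Then for binary utilities u ∈ {0,1}^m and threshold β = 1/2, the Sugeno classifier h(u) = I( S_μ(u) ≥ 1/2 ) equals the rule-set classifier: h(u) = 1 if and only if there exists j ∈ {1,...,J} such that u_i = 1 for all i ∈ A_j. -/
/-- With the 0/1-valued capacity generated by nonempty rule sets
`A_1, …, A_J ⊆ [m]` (with `J ≥ 1`), binary utilities, and threshold `β = 1/2`,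
the Sugeno classifier is exactly the rule-set classifier: `S_μ(u) ≥ 1/2` iff
some rule fires, i.e. `u_i = 1` for all `i ∈ A_j` for some `j`. -/
theorem sugeno_classifier_eq_rule_set (m J : ℕ) (hJ : 1 ≤ J)
    (A : Fin J → Finset (Fin m)) (hA : ∀ j, (A j).Nonempty)
    (μ : Finset (Fin m) → ℝ)
    (hμ : ∀ E : Finset (Fin m), μ E = if ∃ j, A j ⊆ E then 1 else 0)
    (u : Fin m → ℝ) (hu : ∀ i, u i = 0 ∨ u i = 1) :
    ((1 / 2 : ℝ) ≤ sugeno μ u) ↔ ∃ j, ∀ i ∈ A j, u i = 1 := by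
  rw [sugeno, Finset.le_sup'_iff]
  constructor
  · rintro ⟨E, -, hE⟩
    have h1 : (1/2 : ℝ) ≤ setMin u E := le_trans hE (min_le_left _ _)
    have h2 : (1/2 : ℝ) ≤ μ E := le_trans hE (min_le_right _ _)
    rw [hμ] at h2
    by_cases hj : ∃ j, A j ⊆ E
    · obtain ⟨j, hjE⟩ := hj
      refine ⟨j, fun i hi => ?_⟩
      have hiE := hjE hi
      have hne : E.Nonempty := ⟨i, hiE⟩
      rw [setMin, dif_pos hne] at h1
      have := le_trans h1 (Finset.inf'_le u hiE)
      rcases hu i with h | h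
      · linarith
      · exact h
    · rw [if_neg hj] at h2; linarith
  · rintro ⟨j, hj⟩
    refine ⟨A j, Finset.mem_univ _, le_min ?_ ?_⟩
    · rw [setMin, dif_pos (hA j)]
      rw [Finset.le_inf'_iff]
      intro i hi; rw [hj i hi]; linarith
    · rw [hμ, if_pos ⟨j, le_refl _⟩]; linarith
end

section
/- Let μ be a capacity on [m], ε ∈ [0,1), k* ∈ G_{μ,ε} = { k ∈ [m] : μ(B) − ⋁_{A ⊆ B, |A| ≤ k} μ(A) ≤ ε for all nonempty B ⊆ [m] }, and let μ* be defined by μ*(B) = μ(B) if |B| ≤ k* and μ*(B) = ⋁_{A ⊆ B, |A| = k*} μ(A) otherwise. Let u ∈ [0,1]^m, σ a permutation with u_{σ(1)} ≤ ... ≤ u_{σ(m)}, A_{σ(p)} = {σ(p),...,σ(m)}, and suppose p ≤ m − k* and u_{σ(p)} ≤ μ(A_{σ(p)}) with S_μ(u) = u_{σ(p)}. Then S_μ(u) − S_{μ*}(u) ≤ ε. -/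
/-- `⋁_{A ⊆ B, |A| ≤ k} μ(A)`: the maximum of `μ` over all subsets of `B` of
cardinality at most `k`. -/
noncomputable def approxSup {m : ℕ} (μ : Finset (Fin m) → ℝ) (k : ℕ)
    (B : Finset (Fin m)) : ℝ :=
  (B.powerset.filter fun A => A.card ≤ k).sup' ⟨∅, by simp⟩ μ

/-!
Let `B = A_{σ(p)}` and pick `A ⊆ B` with `|A| ≤ k*` attaining `⋁_{A ⊆ B, |A| ≤ k*} μ(A)`.
Since `|A| ≤ k*`, `μ*(A) = μ(A) ≥ μ(B) - ε ≥ u_{σ(p)} - ε`, and every coordinate of `u` on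
`A ⊆ B` is at least `u_{σ(p)}`. The term of `A` in `S_{μ*}(u)` is therefore at least
`u_{σ(p)} - ε = S_μ(u) - ε`.
-/

section Sugeno

variable {m : ℕ}

theorem le_setMin {u : Fin m → ℝ} {A : Finset (Fin m)} {x : ℝ} (hx : x ≤ 1)
    (hA : ∀ a ∈ A, x ≤ u a) : x ≤ setMin u A := by
  unfold setMin
  split_ifs with hne
  · exact Finset.le_inf' hne u hA
  · exact hx

theorem min_setMin_le_sugeno (μ : Finset (Fin m) → ℝ) (u : Fin m → ℝ) (A : Finset (Fin m)) :
    min (setMin u A) (μ A) ≤ sugeno μ u :=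
  Finset.le_sup' (fun A => min (setMin u A) (μ A)) (Finset.mem_univ A)

theorem muStar_of_card_le (μ : Finset (Fin m) → ℝ) {k : ℕ} {A : Finset (Fin m)}
    (hA : A.card ≤ k) : muStar μ k A = μ A :=
  dif_pos hA

theorem exists_subset_card_le_eq_approxSup (μ : Finset (Fin m) → ℝ) (k : ℕ)
    (B : Finset (Fin m)) : ∃ A ⊆ B, A.card ≤ k ∧ μ A = approxSup μ k B := by
  obtain ⟨A, hA, hAeq⟩ :=
    (B.powerset.filter fun A => A.card ≤ k).exists_mem_eq_sup' ⟨∅, by simp⟩ μ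
  rw [Finset.mem_filter, Finset.mem_powerset] at hA
  exact ⟨A, hA.1, hA.2, hAeq.symm⟩

theorem min_approxSup_le_sugeno_muStar (μ : Finset (Fin m) → ℝ) (k : ℕ)
    {u : Fin m → ℝ} {B : Finset (Fin m)} {x : ℝ} (hx : x ≤ 1) (hB : ∀ b ∈ B, x ≤ u b) :
    min x (approxSup μ k B) ≤ sugeno (muStar μ k) u := by
  obtain ⟨A, hAB, hAk, hAeq⟩ := exists_subset_card_le_eq_approxSup μ k B
  calc min x (approxSup μ k B)
      ≤ min (setMin u A) (muStar μ k A) := by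
        rw [muStar_of_card_le μ hAk, hAeq]
        exact min_le_min_right _ (le_setMin hx fun a ha => hB a (hAB ha))
    _ ≤ sugeno (muStar μ k) u := min_setMin_le_sugeno _ u A

end Sugeno

theorem sugeno_muStar_diff_le_eps_general (m kstar : ℕ)
    (μ : Finset (Fin m) → ℝ)
    (ε : ℝ) (hε0 : 0 ≤ ε)
    (hkG : ∀ B : Finset (Fin m), B.Nonempty → μ B - approxSup μ kstar B ≤ ε)
    (u : Fin m → ℝ) (hu : ∀ i, 0 ≤ u i ∧ u i ≤ 1)
    (σ : Equiv.Perm (Fin m))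
    (hσ : ∀ i j : Fin m, i ≤ j → u (σ i) ≤ u (σ j))
    (p : Fin m)
    (hcross : u (σ p) ≤ μ ((Finset.Ici p).image σ))
    (hval : sugeno μ u = u (σ p)) :
    sugeno μ u - sugeno (muStar μ kstar) u ≤ ε := by
  set B := (Finset.Ici p).image σ
  have hB : ∀ b ∈ B, u (σ p) ≤ u b := by
    simpa only [B, Finset.forall_mem_image, Finset.mem_Ici] using hσ p
  have hBne : B.Nonempty := ⟨σ p, Finset.mem_image_of_mem σ (Finset.mem_Ici.2 le_rfl)⟩
  have hlow := min_approxSup_le_sugeno_muStar μ kstar (hu (σ p)).2 hB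
  have hgap := hkG B hBne
  have hmin : u (σ p) - ε ≤ min (u (σ p)) (approxSup μ kstar B) := le_min (by linarith) (by linarith)
  rw [hval]
  linarith

/-- Case (1) of the stability theorem: if `k* ∈ G_{μ,ε}`, the arguments are
sorted as `u_{σ(1)} ≤ … ≤ u_{σ(m)}` with `A_{σ(p)} = {σ(p), …, σ(m)}` (the
index `p : Fin m` encodes the 1-based position `p + 1`), and `p` is a position
with `p ≤ m − k*`, `u_{σ(p)} ≤ μ(A_{σ(p)})` and `S_μ(u) = u_{σ(p)}`, then
`S_μ(u) − S_{μ*}(u) ≤ ε`. -/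
theorem sugeno_muStar_diff_le_eps (m kstar : ℕ)
    (μ : Finset (Fin m) → ℝ) (hμ : IsCapacity μ)
    (ε : ℝ) (hε0 : 0 ≤ ε) (hε1 : ε < 1)
    (hk : kstar ∈ Finset.Icc 1 m)
    (hkG : ∀ B : Finset (Fin m), B.Nonempty → μ B - approxSup μ kstar B ≤ ε)
    (u : Fin m → ℝ) (hu : ∀ i, 0 ≤ u i ∧ u i ≤ 1)
    (σ : Equiv.Perm (Fin m))
    (hσ : ∀ i j : Fin m, i ≤ j → u (σ i) ≤ u (σ j))
    (p : Fin m) (hp : (p : ℕ) + 1 ≤ m - kstar)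
    (hcross : u (σ p) ≤ μ ((Finset.Ici p).image σ))
    (hval : sugeno μ u = u (σ p)) :
    sugeno μ u - sugeno (muStar μ kstar) u ≤ ε :=
  sugeno_muStar_diff_le_eps_general m kstar μ ε hε0 hkG u hu σ hσ p hcross hval
end
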